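/- arXiv:1904.00847 — 5 statements merged into one kernel-verified Lean document; each statement's English description precedes it below -/
import Mathlib

section
/- Let σ₀ > 0, δ ∈ (0, π/2) and s ∈ 𝒮, and set ζ := conj(s)/|s| (so |ζ| = 1). Let Ω ⊆ ℝ^d be open and let u : Ω → ℂ be differentiable with A := ∫_Ω ‖Du(x)‖² dx < ∞ and B := ∫_Ω |u(x)|² dx < ∞, where Du denotes the (Fréchet) derivative of u. Then Re( ζ · ( (A : ℂ) + s² · (B : ℂ) ) ) ≥ sin(δ) · ( A + |s|² · B ). That is, the sesquilinear form a_s(u,v) := (∇u, ∇v)_{L²(Ω)} + s²(u,v)_{L²(Ω)} associated to −Δ + s² satisfies the ellipticity estimate Re(ζ a_s(u,u)) ≥ sin(δ)‖u‖²_{|s|,1,Ω}. -/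
/-! Since `conj s * s ^ 2 = ‖s‖ ^ 2 * s`, the real part of `ζ (A + s² B)` is
`cos (arg s) * (A + ‖s‖² B)`, and `|arg s| < π/2 - δ` on the sector gives
`cos (arg s) ≥ cos (π/2 - δ) = sin δ`. -/

open Real Complex MeasureTheory

theorem Real.sin_le_cos_of_abs_le {δ θ : ℝ} (hδ : -(π / 2) ≤ δ) (hθ : |θ| ≤ π / 2 - δ) :
    sin δ ≤ cos θ := by
  rw [← cos_abs θ, ← cos_pi_div_two_sub δ]
  exact cos_le_cos_of_nonneg_of_le_pi (abs_nonneg θ) (by linarith) hθ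

theorem Complex.re_conj_div_norm_mul_add_sq_mul (s : ℂ) (a b : ℝ) :
    (starRingEnd ℂ s / ‖s‖ * (a + s ^ 2 * b)).re = s.re / ‖s‖ * (a + ‖s‖ ^ 2 * b) := by
  have hconj : starRingEnd ℂ s * s ^ 2 = (‖s‖ ^ 2 : ℝ) * s := by
    rw [sq s, ← mul_assoc, conj_mul']; push_cast; ring
  have hsplit : starRingEnd ℂ s / ‖s‖ * (a + s ^ 2 * b)
      = (a * starRingEnd ℂ s + (‖s‖ ^ 2 * b : ℝ) * s) / (‖s‖ : ℝ) := by
    rw [div_mul_eq_mul_div, mul_add, ← mul_assoc, hconj]; push_cast; ring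
  rw [hsplit, div_ofReal_re]
  simp only [add_re, re_ofReal_mul, conj_re]
  ring

theorem elliptic_form_sector_general (σ₀ δ : ℝ) (hσ₀ : 0 < σ₀) (hδ : δ ∈ Set.Ioo 0 (π / 2))
    (s : ℂ) (hs_re : σ₀ < s.re)
    (harg : Complex.arg s ∈ Set.Ioo (-(π / 2) + δ) (π / 2 - δ))
    (ζ : ℂ) (hζ : ζ = (starRingEnd ℂ) s / (‖s‖ : ℂ))
    (d : ℕ) (Ω : Set (EuclideanSpace ℝ (Fin d)))
    (u : EuclideanSpace ℝ (Fin d) → ℂ)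
    (A B : ℝ)
    (hA : A = ∫ x in Ω, ‖fderivWithin ℝ u Ω x‖ ^ 2)
    (hB : B = ∫ x in Ω, ‖u x‖ ^ 2) :
    Real.sin δ * (A + ‖s‖ ^ 2 * B) ≤ (ζ * ((A : ℂ) + s ^ 2 * (B : ℂ))).re := by
  have hs : s ≠ 0 := by
    rintro rfl
    exact (hσ₀.trans hs_re).ne rfl
  have hA₀ : 0 ≤ A := hA ▸ integral_nonneg fun _ => by positivity
  have hB₀ : 0 ≤ B := hB ▸ integral_nonneg fun _ => by positivity
  have hsin : Real.sin δ ≤ s.re / ‖s‖ := cos_arg hs ▸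
    Real.sin_le_cos_of_abs_le (by linarith [pi_pos, hδ.1])
      (abs_le.2 ⟨by linarith [harg.1], harg.2.le⟩)
  rw [hζ, re_conj_div_norm_mul_add_sq_mul]
  exact mul_le_mul_of_nonneg_right hsin (by positivity)

/-- Ellipticity of the sesquilinear form `a_s(u,u) = ‖∇u‖² + s² ‖u‖²` associated to `-Δ + s²`:
for `s` in the sector `𝒮` and `ζ = conj(s)/|s|`, one has
`Re(ζ (A + s² B)) ≥ sin δ (A + |s|² B)` where `A = ∫_Ω ‖Du‖²` and `B = ∫_Ω |u|²`. -/
theorem elliptic_form_sector (σ₀ δ : ℝ) (hσ₀ : 0 < σ₀) (hδ : δ ∈ Set.Ioo 0 (π / 2))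
    (s : ℂ) (hs_re : σ₀ < s.re)
    (harg : Complex.arg s ∈ Set.Ioo (-(π / 2) + δ) (π / 2 - δ))
    (ζ : ℂ) (hζ : ζ = (starRingEnd ℂ) s / (‖s‖ : ℂ))
    (d : ℕ) (Ω : Set (EuclideanSpace ℝ (Fin d))) (hΩ : IsOpen Ω)
    (u : EuclideanSpace ℝ (Fin d) → ℂ) (hu : DifferentiableOn ℝ u Ω)
    (A B : ℝ)
    (hA : A = ∫ x in Ω, ‖fderivWithin ℝ u Ω x‖ ^ 2)
    (hB : B = ∫ x in Ω, ‖u x‖ ^ 2)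
    (hAint : IntegrableOn (fun x => ‖fderivWithin ℝ u Ω x‖ ^ 2) Ω)
    (hBint : IntegrableOn (fun x => ‖u x‖ ^ 2) Ω) :
    Real.sin δ * (A + ‖s‖ ^ 2 * B) ≤ (ζ * ((A : ℂ) + s ^ 2 * (B : ℂ))).re :=
  elliptic_form_sector_general σ₀ δ hσ₀ hδ s hs_re harg ζ hζ d Ω u A B hA hB
end

section
/- Let σ₀ > 0, δ ∈ (0, π/2) and s ∈ 𝒮. Let 𝒪 ⊆ ℝ^{d−1} be open and let g : 𝒪 → ℂ be continuously differentiable with ∫_𝒪 |g|² dx < ∞ and ∫_𝒪 ‖∇g‖² dx < ∞. Define the boundary layer function û(x̂, ρ) := e^{−sρ} g(x̂) on 𝒪 × (0, ∞). Then there exists a constant C depending only on δ (independent of s, g, 𝒪) such that ∫_{𝒪×(0,∞)} |∂_ρ û|² + ∫_{𝒪×(0,∞)} ‖∇_x̂ ∂_ρ û‖² + ∫_{𝒪×(0,∞)} ρ² |∂_ρ² û|² ≤ C · (|s|² / Re(s)) · ( ∫_𝒪 |g|² + ∫_𝒪 ‖∇g‖² ). -/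
/-!
The integrands factor as a function of `x̂` times `ρ ^ k * |e^{-sρ}|² = ρ ^ k * e^{-2 Re(s) ρ}`
(`k = 0` for the first two, `k = 2` for the third), so by Fubini the three integrals are
`|s|² / (2 Re s) ∫ |g|²`, `|s|² / (2 Re s) ∫ ‖∇g‖²` and `2 |s|⁴ / (2 Re s)³ ∫ |g|²`.
In the sector `Re s ≥ |s| sin δ`, hence `|s|⁴ / (Re s)³ ≤ |s|² / (sin² δ Re s)`, and the estimate
holds with `C = 1/2 + 1/(4 sin² δ)`.
-/

open Real Complex MeasureTheory Nat

theorem Real.integral_pow_mul_exp_neg_mul_Ioi (k : ℕ) {r : ℝ} (hr : 0 < r) :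
    ∫ t in Set.Ioi (0 : ℝ), t ^ k * Real.exp (-(r * t)) = k ! / r ^ (k + 1) := by
  have h := integral_rpow_mul_exp_neg_mul_Ioi (a := k + 1) (by positivity) hr
  simp only [add_sub_cancel_right, Real.rpow_natCast] at h
  rw [h, ← Nat.cast_add_one, Real.rpow_natCast, Nat.cast_add_one, Real.Gamma_nat_eq_factorial,
    one_div, inv_pow, inv_mul_eq_div]

theorem Complex.norm_exp_neg_mul_ofReal_sq (s : ℂ) (t : ℝ) :
    ‖Complex.exp (-s * t)‖ ^ 2 = Real.exp (-(2 * s.re * t)) := by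
  rw [Complex.norm_exp, ← Real.exp_nat_mul]
  congr 1
  simp only [Nat.cast_ofNat, neg_mul, neg_re, mul_re, ofReal_re, ofReal_im, mul_zero, sub_zero]
  ring

theorem Complex.norm_mul_sin_le_re {s : ℂ} {δ : ℝ} (hδ : 0 ≤ δ) (harg : |arg s| ≤ π / 2 - δ) :
    ‖s‖ * Real.sin δ ≤ s.re := by
  rw [← norm_mul_cos_arg, ← Real.cos_abs, ← Real.cos_pi_div_two_sub]
  gcongr
  exact Real.cos_le_cos_of_nonneg_of_le_pi (abs_nonneg _) (by linarith [Real.pi_pos]) harg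

theorem Complex.norm_sq_div_re_sq_le {s : ℂ} {δ : ℝ} (hδ : 0 < δ) (harg : |arg s| ≤ π / 2 - δ) :
    ‖s‖ ^ 2 / s.re ^ 2 ≤ 1 / Real.sin δ ^ 2 := by
  have hsin : 0 < Real.sin δ :=
    Real.sin_pos_of_pos_of_lt_pi hδ (by linarith [abs_nonneg (arg s), Real.pi_pos])
  have hsector := Complex.norm_mul_sin_le_re hδ.le harg
  rcases (le_trans (by positivity) hsector).eq_or_lt with hre | hre
  · rw [← hre, zero_pow two_ne_zero, div_zero]
    positivity
  rw [div_le_div_iff₀ (by positivity) (by positivity), one_mul, ← mul_pow]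
  exact pow_le_pow_left₀ (by positivity) hsector 2

theorem setIntegral_prod_Ioi_mul_pow_mul_norm_cexp_sq {X : Type*} [MeasurableSpace X]
    {μ : Measure X} [SFinite μ] {s : ℂ} (hs : 0 < s.re) (k : ℕ) (f : X → ℝ) (O : Set X) :
    ∫ p in O ×ˢ Set.Ioi (0 : ℝ), f p.1 * (p.2 ^ k * ‖Complex.exp (-s * p.2)‖ ^ 2) ∂μ.prod volume
      = (∫ x in O, f x ∂μ) * (k ! / (2 * s.re) ^ (k + 1)) := by
  simp only [Complex.norm_exp_neg_mul_ofReal_sq]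
  rw [setIntegral_prod_mul f (fun t ↦ t ^ k * Real.exp (-(2 * s.re * t))),
    Real.integral_pow_mul_exp_neg_mul_Ioi k (by linarith)]

/-- Weighted `L²` estimates for the `ρ`-derivatives of the boundary layer function
`û(x̂,ρ) = e^{-sρ} g(x̂)`: there is a constant `C` depending only on `δ` such that for all
`s` in the sector `𝒮` (any `σ₀ > 0`),
`∫ |∂_ρ û|² + ∫ ‖∇_x̂ ∂_ρ û‖² + ∫ ρ² |∂_ρ² û|² ≤ C (|s|²/Re s) (∫ |g|² + ∫ ‖∇g‖²)`. -/
theorem boundary_layer_rho_derivative_estimates (δ : ℝ) (hδ : δ ∈ Set.Ioo 0 (π / 2)) :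
    ∃ C : ℝ, 0 < C ∧
      ∀ (σ₀ : ℝ), 0 < σ₀ →
      ∀ (s : ℂ), σ₀ < s.re →
        Complex.arg s ∈ Set.Ioo (-(π / 2) + δ) (π / 2 - δ) →
      ∀ (d : ℕ) (𝒪 : Set (EuclideanSpace ℝ (Fin (d - 1)))), IsOpen 𝒪 →
      ∀ (g : EuclideanSpace ℝ (Fin (d - 1)) → ℂ), ContDiffOn ℝ 1 g 𝒪 →
        IntegrableOn (fun x => ‖g x‖ ^ 2) 𝒪 →
        IntegrableOn (fun x => ‖fderivWithin ℝ g 𝒪 x‖ ^ 2) 𝒪 →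
      (∫ p in 𝒪 ×ˢ Set.Ioi (0 : ℝ),
          ‖s * Complex.exp (-s * p.2) * g p.1‖ ^ 2) +
        (∫ p in 𝒪 ×ˢ Set.Ioi (0 : ℝ),
          ‖s * Complex.exp (-s * p.2)‖ ^ 2 * ‖fderivWithin ℝ g 𝒪 p.1‖ ^ 2) +
        (∫ p in 𝒪 ×ˢ Set.Ioi (0 : ℝ),
          p.2 ^ 2 * ‖s ^ 2 * Complex.exp (-s * p.2) * g p.1‖ ^ 2) ≤
      C * (‖s‖ ^ 2 / s.re) *
        ((∫ x in 𝒪, ‖g x‖ ^ 2) + ∫ x in 𝒪, ‖fderivWithin ℝ g 𝒪 x‖ ^ 2) := by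
  have hsin : 0 < Real.sin δ := Real.sin_pos_of_pos_of_lt_pi hδ.1 (by linarith [hδ.2, Real.pi_pos])
  refine ⟨1 / 2 + 1 / (4 * Real.sin δ ^ 2), by positivity, ?_⟩
  intro σ₀ hσ₀ s hσ₀s hargs d 𝒪 h𝒪 g _ _ _
  have hre : 0 < s.re := hσ₀.trans hσ₀s
  have hratio : ‖s‖ ^ 2 / s.re ^ 2 ≤ 1 / Real.sin δ ^ 2 :=
    Complex.norm_sq_div_re_sq_le hδ.1 (abs_le.2 ⟨by linarith [hargs.1], by linarith [hargs.2]⟩)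
  set A := ∫ x in 𝒪, ‖g x‖ ^ 2
  set B := ∫ x in 𝒪, ‖fderivWithin ℝ g 𝒪 x‖ ^ 2
  have hA : 0 ≤ A := setIntegral_nonneg h𝒪.measurableSet fun _ _ ↦ by positivity
  have hB : 0 ≤ B := setIntegral_nonneg h𝒪.measurableSet fun _ _ ↦ by positivity
  rw [Measure.volume_eq_prod]
  have h₁ : ∫ p in 𝒪 ×ˢ Set.Ioi (0 : ℝ), ‖s * Complex.exp (-s * p.2) * g p.1‖ ^ 2 ∂volume.prod volume
      = ‖s‖ ^ 2 * A * (0 ! / (2 * s.re) ^ 1) := by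
    rw [← integral_const_mul, ← setIntegral_prod_Ioi_mul_pow_mul_norm_cexp_sq hre]
    congr 1 with p
    simp only [norm_mul]
    ring
  have h₂ : ∫ p in 𝒪 ×ˢ Set.Ioi (0 : ℝ),
        ‖s * Complex.exp (-s * p.2)‖ ^ 2 * ‖fderivWithin ℝ g 𝒪 p.1‖ ^ 2 ∂volume.prod volume
      = ‖s‖ ^ 2 * B * (0 ! / (2 * s.re) ^ 1) := by
    rw [← integral_const_mul, ← setIntegral_prod_Ioi_mul_pow_mul_norm_cexp_sq hre]
    congr 1 with p
    simp only [norm_mul]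
    ring
  have h₃ : ∫ p in 𝒪 ×ˢ Set.Ioi (0 : ℝ),
        p.2 ^ 2 * ‖s ^ 2 * Complex.exp (-s * p.2) * g p.1‖ ^ 2 ∂volume.prod volume
      = ‖s‖ ^ 4 * A * (2 ! / (2 * s.re) ^ 3) := by
    rw [← integral_const_mul, ← setIntegral_prod_Ioi_mul_pow_mul_norm_cexp_sq hre]
    congr 1 with p
    simp only [norm_mul, norm_pow]
    ring
  rw [h₁, h₂, h₃]
  calc _ = ‖s‖ ^ 2 / s.re * (1 / 2) * (A + B) + ‖s‖ ^ 2 / s.re * (‖s‖ ^ 2 / s.re ^ 2 / 4) * A := by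
        simp only [factorial]
        field_simp
        ring
    _ ≤ ‖s‖ ^ 2 / s.re * (1 / 2) * (A + B) + ‖s‖ ^ 2 / s.re * (1 / Real.sin δ ^ 2 / 4) * (A + B) := by
        gcongr
        linarith
    _ = _ := by ring
end

section
/- Let σ₀ > 0, δ ∈ (0, π/2), s ∈ 𝒮, ε > 0, ℓ ∈ ℝ and j ∈ ℕ. Let 𝒪 ⊆ ℝ^{d−1} be measurable and let g : 𝒪 → ℂ be measurable with ∫_𝒪 |g|² dx < ∞. Then the j-th ρ-derivative of the boundary layer function û(x̂,ρ) := e^{−sρ} g(x̂) equals (−s)^j e^{−sρ} g(x̂), and there is a constant C = C(ε, ℓ, j, σ₀, δ), independent of s and g, such that ∫_{𝒪×(ε,∞)} |∂_ρ^j û|² d(x̂,ρ) = (|s|^{2j} e^{−2 Re(s) ε} / (2 Re(s))) · ∫_𝒪 |g|² ≤ C · |s|^{−2ℓ} · ∫_𝒪 |g|². -/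
/-!
Since `|∂ᵨʲ û|² = |s|^{2j} e^{-2 Re(s) ρ} |g(x̂)|²` separates variables, Fubini and
`∫_ε^∞ e^{-2 Re(s) ρ} dρ = e^{-2 Re(s) ε} / (2 Re s)` give the identity. In the sector,
`Re s ≥ |s| sin δ`, so the coefficient is at most `|s|^{2j} e^{-2ε sin δ |s|} / (2σ₀)`, and
`t^{2j+2ℓ} e^{-ct}` is bounded on `[σ₀, ∞)`.
-/

open Real Complex MeasureTheory

lemma iteratedDeriv_cexp_neg_mul_ofReal_mul (s c : ℂ) (j : ℕ) (ρ : ℝ) :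
    iteratedDeriv j (fun t : ℝ => Complex.exp (-s * t) * c) ρ =
      (-s) ^ j * Complex.exp (-s * ρ) * c := by
  induction j generalizing ρ with
  | zero => simp
  | succ j ih =>
    rw [iteratedDeriv_succ, funext ih]
    have hlin : HasDerivAt (fun t : ℝ => -s * (t : ℂ)) (-s) ρ := by
      simpa using (ofRealCLM.hasDerivAt (x := ρ)).const_mul (-s)
    convert ((hlin.cexp.const_mul ((-s) ^ j)).mul_const c).deriv using 1
    ring

lemma norm_sq_neg_pow_mul_cexp_mul (s c : ℂ) (j : ℕ) (ρ : ℝ) :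
    ‖(-s) ^ j * Complex.exp (-s * ρ) * c‖ ^ 2 =
      ‖c‖ ^ 2 * (‖s‖ ^ (2 * j) * Real.exp (-2 * s.re * ρ)) := by
  have hre : (-s * (ρ : ℂ)).re = -(s.re * ρ) := by simp [Complex.mul_re]
  simp only [norm_mul, norm_pow, norm_neg, Complex.norm_exp, hre, mul_pow, ← Real.exp_nat_mul,
    pow_mul']
  ring_nf

lemma setIntegral_prod_Ioi_norm_sq_neg_pow_mul_cexp_mul {X : Type*} [MeasureSpace X]
    [SFinite (volume : Measure X)] {s : ℂ} (hs : 0 < s.re) (j : ℕ) (A : Set X) (g : X → ℂ)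
    (ε : ℝ) :
    ∫ p in A ×ˢ Set.Ioi ε, ‖(-s) ^ j * Complex.exp (-s * p.2) * g p.1‖ ^ 2 =
      ‖s‖ ^ (2 * j) * Real.exp (-2 * s.re * ε) / (2 * s.re) * ∫ x in A, ‖g x‖ ^ 2 := by
  simp_rw [norm_sq_neg_pow_mul_cexp_mul]
  rw [Measure.volume_eq_prod, setIntegral_prod_mul (fun x => ‖g x‖ ^ 2)
    (fun ρ => ‖s‖ ^ (2 * j) * Real.exp (-2 * s.re * ρ)), integral_const_mul,
    integral_exp_mul_Ioi (by linarith) ε]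
  ring

lemma norm_mul_cos_le_re_of_abs_arg_le {s : ℂ} {θ : ℝ} (hθ : θ ≤ π) (h : |arg s| ≤ θ) :
    ‖s‖ * Real.cos θ ≤ s.re := by
  rw [← norm_mul_cos_arg, ← Real.cos_abs (arg s)]
  exact mul_le_mul_of_nonneg_left
    (Real.cos_le_cos_of_nonneg_of_le_pi (abs_nonneg _) hθ h) (norm_nonneg _)

lemma pow_mul_exp_neg_mul_le {c t : ℝ} (hc : 0 < c) (ht : 0 ≤ t) (n : ℕ) :
    t ^ n * Real.exp (-(c * t)) ≤ n.factorial / c ^ n := by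
  have hexp : (c * t) ^ n ≤ n.factorial * Real.exp (c * t) := by
    rw [← div_le_iff₀' (by positivity)]
    exact Real.pow_div_factorial_le_exp (c * t) (by positivity) n
  rw [le_div_iff₀ (by positivity)]
  calc t ^ n * Real.exp (-(c * t)) * c ^ n = (c * t) ^ n * Real.exp (-(c * t)) := by ring
    _ ≤ n.factorial * Real.exp (c * t) * Real.exp (-(c * t)) := by gcongr
    _ = n.factorial := by rw [mul_assoc, ← Real.exp_add, add_neg_cancel, Real.exp_zero, mul_one]

lemma exists_rpow_mul_exp_neg_mul_le {σ₀ c : ℝ} (hσ₀ : 0 < σ₀) (hc : 0 < c) (a : ℝ) :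
    ∃ M, ∀ t, σ₀ ≤ t → t ^ a * Real.exp (-(c * t)) ≤ M := by
  set n := ⌈a⌉₊
  refine ⟨σ₀ ^ (a - n) * (n.factorial / c ^ n), fun t ht => ?_⟩
  have ht0 : 0 < t := hσ₀.trans_le ht
  -- the exponent `a - n` is non-positive, so `t ^ (a - n)` is largest at `t = σ₀`
  have hsplit : t ^ a = t ^ (a - n) * t ^ n := by
    rw [← Real.rpow_natCast, ← Real.rpow_add ht0, sub_add_cancel]
  rw [hsplit, mul_assoc]
  exact mul_le_mul (Real.rpow_le_rpow_of_nonpos hσ₀ ht (by linarith [Nat.le_ceil a]))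
    (pow_mul_exp_neg_mul_le hc ht0.le n) (by positivity) (by positivity)

lemma norm_pow_mul_exp_div_le_of_re_ge {σ₀ κ ε ℓ M : ℝ} {j : ℕ} {s : ℂ} (hσ₀ : 0 < σ₀)
    (hs : σ₀ < s.re) (hε : 0 < ε) (hsector : ‖s‖ * κ ≤ s.re)
    (hM : ∀ t, σ₀ ≤ t → t ^ (2 * j + 2 * ℓ) * Real.exp (-(2 * ε * κ * t)) ≤ M) :
    ‖s‖ ^ (2 * j) * Real.exp (-2 * s.re * ε) / (2 * s.re) ≤ M / (2 * σ₀) * ‖s‖ ^ (-(2 * ℓ)) := by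
  have hσs : σ₀ ≤ ‖s‖ := hs.le.trans (re_le_norm s)
  have hs0 : 0 < ‖s‖ := hσ₀.trans_le hσs
  have hsplit : ‖s‖ ^ (2 * j) = ‖s‖ ^ (2 * j + 2 * ℓ : ℝ) * ‖s‖ ^ (-(2 * ℓ)) := by
    rw [← Real.rpow_add hs0, ← Real.rpow_natCast]
    push_cast
    ring_nf
  have hexp : Real.exp (-2 * s.re * ε) ≤ Real.exp (-(2 * ε * κ * ‖s‖)) :=
    Real.exp_le_exp.2 (by nlinarith)
  calc ‖s‖ ^ (2 * j) * Real.exp (-2 * s.re * ε) / (2 * s.re)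
      ≤ ‖s‖ ^ (2 * j) * Real.exp (-(2 * ε * κ * ‖s‖)) / (2 * σ₀) := by
        gcongr
    _ = ‖s‖ ^ (2 * j + 2 * ℓ : ℝ) * Real.exp (-(2 * ε * κ * ‖s‖)) / (2 * σ₀) *
          ‖s‖ ^ (-(2 * ℓ)) := by
        rw [hsplit]; ring
    _ ≤ M / (2 * σ₀) * ‖s‖ ^ (-(2 * ℓ)) := by
        gcongr
        exact hM _ hσs

/-- Away from the boundary, the boundary layer `û(x̂,ρ) = e^{-sρ} g(x̂)` is negligible to any
polynomial order in `|s|`: its `j`-th `ρ`-derivative is `(-s)^j e^{-sρ} g(x̂)`, and for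
`s ∈ 𝒮` one has
`∫_{𝒪×(ε,∞)} |∂_ρ^j û|² = |s|^{2j} e^{-2 Re(s) ε}/(2 Re s) ∫_𝒪 |g|² ≤ C |s|^{-2ℓ} ∫_𝒪 |g|²`
with `C = C(ε, ℓ, j, σ₀, δ)` independent of `s` and `g`. -/
theorem boundary_layer_negligible_away_from_boundary
    (σ₀ δ : ℝ) (hσ₀ : 0 < σ₀) (hδ : δ ∈ Set.Ioo 0 (π / 2))
    (ε : ℝ) (hε : 0 < ε) (ℓ : ℝ) (j : ℕ) :
    ∃ C : ℝ, ∀ (s : ℂ), σ₀ < s.re →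
      Complex.arg s ∈ Set.Ioo (-(π / 2) + δ) (π / 2 - δ) →
      ∀ (d : ℕ) (𝒪 : Set (EuclideanSpace ℝ (Fin (d - 1)))), MeasurableSet 𝒪 →
      ∀ (g : EuclideanSpace ℝ (Fin (d - 1)) → ℂ), Measurable g →
        IntegrableOn (fun x => ‖g x‖ ^ 2) 𝒪 →
      (∀ (x : EuclideanSpace ℝ (Fin (d - 1))) (ρ : ℝ),
          iteratedDeriv j (fun t : ℝ => Complex.exp (-s * t) * g x) ρ =
            (-s) ^ j * Complex.exp (-s * ρ) * g x) ∧
      ((∫ p in 𝒪 ×ˢ Set.Ioi ε,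
          ‖(-s) ^ j * Complex.exp (-s * p.2) * g p.1‖ ^ 2) =
        ‖s‖ ^ (2 * j) * Real.exp (-2 * s.re * ε) / (2 * s.re) *
          ∫ x in 𝒪, ‖g x‖ ^ 2) ∧
      ‖s‖ ^ (2 * j) * Real.exp (-2 * s.re * ε) / (2 * s.re) *
          (∫ x in 𝒪, ‖g x‖ ^ 2) ≤
        C * ‖s‖ ^ (-(2 * ℓ)) * ∫ x in 𝒪, ‖g x‖ ^ 2 := by
  have hsin : 0 < Real.sin δ :=
    Real.sin_pos_of_pos_of_lt_pi hδ.1 (by linarith [hδ.2, Real.pi_pos])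
  obtain ⟨M, hM⟩ := exists_rpow_mul_exp_neg_mul_le hσ₀
    (by positivity : 0 < 2 * ε * Real.sin δ) (2 * j + 2 * ℓ)
  refine ⟨M / (2 * σ₀), fun s hs harg d 𝒪 _ g _ _ =>
    ⟨fun x ρ => iteratedDeriv_cexp_neg_mul_ofReal_mul s (g x) j ρ,
      setIntegral_prod_Ioi_norm_sq_neg_pow_mul_cexp_mul (by linarith) j 𝒪 g ε, ?_⟩⟩
  have hsector : ‖s‖ * Real.sin δ ≤ s.re := by
    rw [← Real.cos_pi_div_two_sub]
    exact norm_mul_cos_le_re_of_abs_arg_le (by linarith [hδ.1, Real.pi_pos])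
      (abs_le.2 ⟨by linarith [harg.1], by linarith [harg.2]⟩)
  exact mul_le_mul_of_nonneg_right (norm_pow_mul_exp_div_le_of_re_ge hσ₀ hs hε hsector hM)
    (integral_nonneg fun _ => by positivity)
end

section
/- Fix an opening angle ω ∈ (0, 2π) and set c₁ := cos(ω/2), c₂ := sin(ω/2) (so c₂ > 0), and fix μ > 0. There exists a constant C = C(ω, μ) such that for every continuously differentiable g : [−1, 1] → ℂ and every a > 0, ∫₀¹ |g(r c₁) − g(−r c₁)|² e^{−2 a μ c₂ r} dr ≤ (C / a²) · ∫_{−1}^{1} |g'(τ)|² dτ. -/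
open Real Complex MeasureTheory

/-!
By the fundamental theorem of calculus and Cauchy–Schwarz, a `C¹` function on `[-1, 1]` satisfies
`|g(x) - g(-x)|² ≤ 2|x| ∫_{-1}^{1} |g'|²`. At `x = r c₁` this is at most `2 r ∫ |g'|²`, and
`∫₀¹ r e^{-L r} dr ≤ ∫₀^∞ r e^{-L r} dr = 1 / L²` with `L = 2 a μ c₂`; hence `C = 1 / (2 μ² c₂²)`.
-/

open Set

theorem sq_integral_norm_le_measureReal_mul {α E : Type*} [MeasurableSpace α]
    [NormedAddCommGroup E] {μ : Measure α} [IsFiniteMeasure μ] {f : α → E} (hf : MemLp f 2 μ) :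
    (∫ x, ‖f x‖ ∂μ) ^ 2 ≤ μ.real univ * ∫ x, ‖f x‖ ^ 2 ∂μ := by
  have holder := integral_mul_norm_le_Lp_mul_Lq (f := fun x => ‖f x‖) (g := fun _ => (1 : ℝ))
    Real.HolderConjugate.two_two (by simpa using hf.norm) (by simpa using memLp_const (1 : ℝ))
  simp only [norm_norm, norm_one, one_pow, mul_one, integral_const, smul_eq_mul, Real.rpow_two,
    ← Real.sqrt_eq_rpow] at holder
  calc (∫ x, ‖f x‖ ∂μ) ^ 2 ≤ (√(∫ x, ‖f x‖ ^ 2 ∂μ) * √(μ.real univ)) ^ 2 :=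
        pow_le_pow_left₀ (integral_nonneg fun _ => norm_nonneg _) holder 2
    _ = μ.real univ * ∫ x, ‖f x‖ ^ 2 ∂μ := by
        rw [mul_pow, sq_sqrt (integral_nonneg fun _ => by positivity), sq_sqrt measureReal_nonneg,
          mul_comm]

section Jump

variable {E : Type*} [NormedAddCommGroup E] [NormedSpace ℝ E]

theorem norm_sub_sq_le_mul_integral_norm_deriv_sq [CompleteSpace E] {g : ℝ → E} {a b : ℝ}
    (hab : a ≤ b) (hcont : ContinuousOn g (Icc a b))
    (hdiff : ∀ x ∈ Ioo a b, DifferentiableAt ℝ g x)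
    (hint : IntegrableOn (fun x => ‖deriv g x‖ ^ 2) (Ioo a b)) :
    ‖g b - g a‖ ^ 2 ≤ (b - a) * ∫ x in Ioo a b, ‖deriv g x‖ ^ 2 := by
  have hL2 : MemLp (deriv g) 2 (volume.restrict (Ioo a b)) :=
    (memLp_two_iff_integrable_sq_norm (stronglyMeasurable_deriv g).aestronglyMeasurable).2 hint
  have hftc : ∫ x in Ioo a b, deriv g x = g b - g a := by
    rw [← integral_Ioc_eq_integral_Ioo, ← intervalIntegral.integral_of_le hab]
    exact intervalIntegral.integral_eq_sub_of_hasDerivAt_of_le hab hcont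
      (fun x hx => (hdiff x hx).hasDerivAt)
      ((intervalIntegrable_iff_integrableOn_Ioo_of_le hab).2 (hL2.integrable one_le_two))
  calc ‖g b - g a‖ ^ 2 ≤ (∫ x in Ioo a b, ‖deriv g x‖) ^ 2 := by
        rw [← hftc]
        exact pow_le_pow_left₀ (norm_nonneg _) (norm_integral_le_integral_norm _) 2
    _ ≤ (b - a) * ∫ x in Ioo a b, ‖deriv g x‖ ^ 2 := by
        simpa [volume_real_Ioo_of_le hab] using sq_integral_norm_le_measureReal_mul hL2

theorem ContDiffOn.integrableOn_norm_deriv_sq {g : ℝ → E} {a b : ℝ}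
    (hg : ContDiffOn ℝ 1 g (Icc a b)) : IntegrableOn (fun x => ‖deriv g x‖ ^ 2) (Ioo a b) := by
  rcases lt_or_ge a b with hab | hab
  · have hcont : ContinuousOn (fun x => ‖derivWithin g (Icc a b) x‖ ^ 2) (Icc a b) :=
      ((hg.continuousOn_derivWithin (uniqueDiffOn_Icc hab) le_rfl).norm).pow 2
    refine (hcont.integrableOn_Icc.mono_set Ioo_subset_Icc_self).congr_fun (fun x hx => ?_)
      measurableSet_Ioo
    simp only [derivWithin_of_mem_nhds (Icc_mem_nhds hx.1 hx.2)]
  · simp [Ioo_eq_empty_of_le hab]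

theorem ContDiffOn.norm_sub_sq_le [CompleteSpace E] {g : ℝ → E} {a b x y : ℝ}
    (hg : ContDiffOn ℝ 1 g (Icc a b)) (hax : a ≤ x) (hxy : x ≤ y) (hyb : y ≤ b) :
    ‖g y - g x‖ ^ 2 ≤ (y - x) * ∫ t in Ioo a b, ‖deriv g t‖ ^ 2 := by
  have hIoo : Ioo x y ⊆ Ioo a b := Ioo_subset_Ioo hax hyb
  have hint := hg.integrableOn_norm_deriv_sq
  calc ‖g y - g x‖ ^ 2 ≤ (y - x) * ∫ t in Ioo x y, ‖deriv g t‖ ^ 2 :=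
        norm_sub_sq_le_mul_integral_norm_deriv_sq hxy
          (hg.continuousOn.mono (Icc_subset_Icc hax hyb))
          (fun t ht => (hg.differentiableOn one_ne_zero).differentiableAt
            (Icc_mem_nhds (hax.trans_lt ht.1) (ht.2.trans_le hyb)))
          (hint.mono_set hIoo)
    _ ≤ (y - x) * ∫ t in Ioo a b, ‖deriv g t‖ ^ 2 :=
        mul_le_mul_of_nonneg_left
          (setIntegral_mono_set hint (.of_forall fun _ => by positivity) hIoo.eventuallyLE)
          (sub_nonneg.2 hxy)

theorem ContDiffOn.norm_sub_comp_neg_sq_le [CompleteSpace E] {g : ℝ → E} {b x : ℝ}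
    (hg : ContDiffOn ℝ 1 g (Icc (-b) b)) (hxb : |x| ≤ b) :
    ‖g x - g (-x)‖ ^ 2 ≤ 2 * |x| * ∫ t in Ioo (-b) b, ‖deriv g t‖ ^ 2 := by
  have of_nonneg : ∀ y, 0 ≤ y → y ≤ b →
      ‖g y - g (-y)‖ ^ 2 ≤ 2 * y * ∫ t in Ioo (-b) b, ‖deriv g t‖ ^ 2 := fun y hy0 hyb => by
    simpa [two_mul] using hg.norm_sub_sq_le (neg_le_neg hyb) (by linarith) hyb
  rcases le_total 0 x with hx | hx
  · rw [abs_of_nonneg hx] at hxb ⊢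
    exact of_nonneg x hx hxb
  · rw [abs_of_nonpos hx] at hxb ⊢
    simpa [norm_sub_rev] using of_nonneg (-x) (neg_nonneg.2 hx) hxb

end Jump

theorem integral_Ioi_mul_exp_neg_mul {L : ℝ} (hL : 0 < L) :
    ∫ r in Ioi 0, r * Real.exp (-(L * r)) = 1 / L ^ 2 := by
  have := Real.integral_rpow_mul_exp_neg_mul_Ioi (a := 2) two_pos hL
  norm_num [Real.rpow_two] at this
  rwa [one_div]

theorem integrableOn_Ioi_mul_exp_neg_mul {L : ℝ} (hL : 0 < L) :
    IntegrableOn (fun r => r * Real.exp (-(L * r))) (Ioi 0) := by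
  simpa [neg_mul] using
    integrableOn_rpow_mul_exp_neg_mul_rpow (s := 1) (p := 1) (by norm_num) one_pos hL

theorem integral_Ioo_mul_exp_neg_mul_le {L : ℝ} (hL : 0 < L) :
    ∫ r in Ioo 0 1, r * Real.exp (-(L * r)) ≤ 1 / L ^ 2 :=
  integral_Ioi_mul_exp_neg_mul hL ▸ setIntegral_mono_set (integrableOn_Ioi_mul_exp_neg_mul hL)
    (ae_restrict_of_forall_mem measurableSet_Ioi fun _ hr =>
      mul_nonneg (le_of_lt hr) (exp_pos _).le)
    Ioo_subset_Ioi_self.eventuallyLE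

/-- Dirichlet jump estimate at a corner: with `c₁ = cos(ω/2)`, `c₂ = sin(ω/2)`, `μ > 0`,
there is `C = C(ω, μ)` such that for every `C¹` function `g : [-1,1] → ℂ` and every `a > 0`,
`∫₀¹ |g(r c₁) - g(-r c₁)|² e^{-2 a μ c₂ r} dr ≤ (C / a²) ∫_{-1}^{1} |g'|²`. -/
theorem corner_dirichlet_jump_estimate (ω μ : ℝ) (hω : ω ∈ Set.Ioo 0 (2 * π)) (hμ : 0 < μ) :
    ∃ C : ℝ, 0 < C ∧
      ∀ g : ℝ → ℂ, ContDiffOn ℝ 1 g (Set.Icc (-1 : ℝ) 1) →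
      ∀ a : ℝ, 0 < a →
      (∫ r in Set.Ioo (0 : ℝ) 1,
          ‖g (r * Real.cos (ω / 2)) - g (-(r * Real.cos (ω / 2)))‖ ^ 2 *
            Real.exp (-2 * a * μ * Real.sin (ω / 2) * r)) ≤
        C / a ^ 2 * ∫ τ in Set.Ioo (-1 : ℝ) 1, ‖deriv g τ‖ ^ 2 := by
  have hc₂ : 0 < Real.sin (ω / 2) :=
    Real.sin_pos_of_pos_of_lt_pi (by linarith [hω.1]) (by linarith [hω.2])
  refine ⟨1 / (2 * μ ^ 2 * Real.sin (ω / 2) ^ 2), by positivity, fun g hg a ha => ?_⟩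
  set I := ∫ τ in Ioo (-1 : ℝ) 1, ‖deriv g τ‖ ^ 2
  set L := 2 * a * μ * Real.sin (ω / 2)
  have hL : 0 < L := by positivity
  have hI : 0 ≤ I := setIntegral_nonneg measurableSet_Ioo fun _ _ => by positivity
  have pointwise : ∀ r ∈ Ioo (0 : ℝ) 1,
      ‖g (r * Real.cos (ω / 2)) - g (-(r * Real.cos (ω / 2)))‖ ^ 2 *
        Real.exp (-2 * a * μ * Real.sin (ω / 2) * r) ≤ 2 * I * (r * Real.exp (-(L * r))) := by
    intro r hr
    have hrc : |r * Real.cos (ω / 2)| ≤ r := by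
      simpa [abs_mul, abs_of_pos hr.1] using
        mul_le_mul_of_nonneg_left (abs_cos_le_one (ω / 2)) hr.1.le
    have hjump := hg.norm_sub_comp_neg_sq_le (hrc.trans hr.2.le)
    rw [show -2 * a * μ * Real.sin (ω / 2) * r = -(L * r) by ring]
    calc _ ≤ 2 * r * I * Real.exp (-(L * r)) := by gcongr; exact hjump.trans (by gcongr)
      _ = 2 * I * (r * Real.exp (-(L * r))) := by ring
  calc _ ≤ ∫ r in Ioo (0 : ℝ) 1, 2 * I * (r * Real.exp (-(L * r))) :=
        integral_mono_of_nonneg (.of_forall fun _ => by positivity)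
          (((integrableOn_Ioi_mul_exp_neg_mul hL).mono_set Ioo_subset_Ioi_self).const_mul _)
          (ae_restrict_of_forall_mem measurableSet_Ioo pointwise)
    _ ≤ 2 * I * (1 / L ^ 2) := by
        rw [integral_const_mul]
        exact mul_le_mul_of_nonneg_left (integral_Ioo_mul_exp_neg_mul_le hL) (by positivity)
    _ = _ := by
        simp only [L]
        field_simp
end

section
/- Fix an opening angle ω ∈ (0, 2π) and set c₁ := cos(ω/2), c₂ := sin(ω/2) (so c₂ > 0), and fix μ > 0. There exists a constant C = C(ω, μ) such that for every continuously differentiable g : [−1, 1] → ℂ and every a > 0, ∫₀¹ r^{−1} |g(r c₁) − g(−r c₁)|² e^{−2 a μ c₂ r} dr ≤ (C / a) · ∫_{−1}^{1} |g'(τ)|² dτ. (This is the distance-weighted jump estimate ‖d₀^{−1/2}(u₁ − u₂)‖²_{L²(Γ')} ≲ Re(s)^{−1} ‖g'‖²_{L²(−1,1)}, where d₀(r) = r is the distance to the apex.) -/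
/-!
By the fundamental theorem of calculus and Cauchy–Schwarz, `‖g t - g (-t)‖² ≤ 2 t ‖g'‖²_{L²(-1,1)}`
for `0 ≤ t < 1`. Taking `t = r |cos (ω/2)|`, this linear vanishing at the apex cancels the weight
`r⁻¹`, and what remains is `∫₀^∞ exp (-2 a μ sin (ω/2) r) dr = 1 / (2 a μ sin (ω/2))`.
-/

open Real Complex MeasureTheory Set

theorem sq_integral_le_measureReal_univ_mul_integral_sq {α : Type*} [MeasurableSpace α]
    {μ : Measure α} [IsFiniteMeasure μ] {f : α → ℝ} (hf : Integrable f μ)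
    (hf2 : Integrable (fun x => f x ^ 2) μ) :
    (∫ x, f x ∂μ) ^ 2 ≤ μ.real univ * ∫ x, f x ^ 2 ∂μ := by
  rcases eq_zero_or_neZero μ with rfl | _
  · simp
  have hL : 0 < μ.real univ := by
    simpa [Measure.real, ENNReal.toReal_pos_iff, measure_lt_top] using NeZero.ne μ
  have jensen : (⨍ x, f x ∂μ) ^ 2 ≤ ⨍ x, f x ^ 2 ∂μ :=
    (Even.convexOn_pow even_two).map_average_le (continuous_pow 2).continuousOn isClosed_univ
      (Filter.Eventually.of_forall fun _ => mem_univ _) hf hf2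
  rw [average_eq, average_eq, smul_eq_mul, smul_eq_mul, mul_pow] at jensen
  have := mul_le_mul_of_nonneg_left jensen (sq_nonneg (μ.real univ))
  field_simp at this
  nlinarith [this]

theorem ContDiffOn.norm_sub_sq_le_mul_integral_norm_deriv_sq {E : Type*} [NormedAddCommGroup E]
    [NormedSpace ℝ E] [CompleteSpace E] {f : ℝ → E} {U : Set ℝ} (hf : ContDiffOn ℝ 1 f U)
    (hU : IsOpen U) {a b : ℝ} (hab : a ≤ b) (hsub : Icc a b ⊆ U) :
    ‖f b - f a‖ ^ 2 ≤ (b - a) * ∫ x in a..b, ‖deriv f x‖ ^ 2 := by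
  have hcont : ContinuousOn (deriv f) (Icc a b) :=
    (hf.continuousOn_deriv_of_isOpen hU le_rfl).mono hsub
  have hderiv : ∀ x ∈ uIcc a b, HasDerivAt f (deriv f x) x := fun x hx =>
    ((hf.differentiableOn one_ne_zero).differentiableAt
      (hU.mem_nhds (hsub (uIcc_of_le hab ▸ hx)))).hasDerivAt
  have hint : IntegrableOn (deriv f) (Ioc a b) :=
    (hcont.integrableOn_Icc).mono_set Ioc_subset_Icc_self
  have hint2 : IntegrableOn (fun x => ‖deriv f x‖ ^ 2) (Ioc a b) :=
    ((hcont.norm.pow 2).integrableOn_Icc).mono_set Ioc_subset_Icc_self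
  rw [← intervalIntegral.integral_eq_sub_of_hasDerivAt hderiv
    (hcont.intervalIntegrable_of_Icc hab)]
  calc ‖∫ x in a..b, deriv f x‖ ^ 2 ≤ (∫ x in a..b, ‖deriv f x‖) ^ 2 := by
        gcongr
        exact intervalIntegral.norm_integral_le_integral_norm hab
    _ ≤ (b - a) * ∫ x in a..b, ‖deriv f x‖ ^ 2 := by
        rw [intervalIntegral.integral_of_le hab, intervalIntegral.integral_of_le hab,
          ← volume_real_Ioc_of_le hab, ← measureReal_restrict_apply_univ]
        exact sq_integral_le_measureReal_univ_mul_integral_sq hint.norm hint2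

theorem ContDiffOn.integrableOn_Ioo_norm_deriv_sq {E : Type*} [NormedAddCommGroup E]
    [NormedSpace ℝ E] {f : ℝ → E} {a b : ℝ} (hf : ContDiffOn ℝ 1 f (Icc a b)) :
    IntegrableOn (fun x => ‖deriv f x‖ ^ 2) (Ioo a b) := by
  rcases lt_or_ge a b with hab | hab
  · have hcont : ContinuousOn (derivWithin f (Icc a b)) (Icc a b) :=
      hf.continuousOn_derivWithin (uniqueDiffOn_Icc hab) le_rfl
    refine ((hcont.norm.pow 2).integrableOn_Icc.mono_set Ioo_subset_Icc_self).congr_fun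
      (fun x hx => ?_) measurableSet_Ioo
    simp only [Pi.pow_apply, derivWithin_of_mem_nhds (Icc_mem_nhds hx.1 hx.2)]
  · simp [Ioo_eq_empty (not_lt.2 hab)]

theorem ContDiffOn.norm_sub_sq_le_mul_integral_Ioo_norm_deriv_sq {E : Type*}
    [NormedAddCommGroup E] [NormedSpace ℝ E] [CompleteSpace E] {f : ℝ → E} {a b x y : ℝ}
    (hf : ContDiffOn ℝ 1 f (Icc a b)) (hxy : x ≤ y) (hsub : Icc x y ⊆ Ioo a b) :
    ‖f y - f x‖ ^ 2 ≤ (y - x) * ∫ τ in Ioo a b, ‖deriv f τ‖ ^ 2 := by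
  refine ((hf.mono Ioo_subset_Icc_self).norm_sub_sq_le_mul_integral_norm_deriv_sq isOpen_Ioo
    hxy hsub).trans ?_
  gcongr
  rw [intervalIntegral.integral_of_le hxy]
  exact setIntegral_mono_set hf.integrableOn_Ioo_norm_deriv_sq
    (Filter.Eventually.of_forall fun _ => sq_nonneg _)
    (Ioc_subset_Icc_self.trans hsub).eventuallyLE

theorem norm_sub_comp_neg_eq_abs {E : Type*} [NormedAddCommGroup E] (f : ℝ → E) (x : ℝ) :
    ‖f x - f (-x)‖ = ‖f |x| - f (-|x|)‖ := by
  rcases le_total 0 x with hx | hx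
  · rw [abs_of_nonneg hx]
  · rw [abs_of_nonpos hx, neg_neg, norm_sub_rev]

theorem setIntegral_Ioo_inv_mul_mul_exp_le {F : ℝ → ℝ} {M l : ℝ} (hl : 0 < l)
    (hF_nonneg : ∀ r ∈ Ioo (0 : ℝ) 1, 0 ≤ F r) (hF_le : ∀ r ∈ Ioo (0 : ℝ) 1, F r ≤ M * r) :
    ∫ r in Ioo (0 : ℝ) 1, r⁻¹ * F r * Real.exp (-l * r) ≤ M / l := by
  have hM : 0 ≤ M := by
    have := (hF_nonneg _ ⟨one_half_pos, one_half_lt_one⟩).trans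
      (hF_le _ ⟨one_half_pos, one_half_lt_one⟩)
    linarith
  have hexp_int : IntegrableOn (fun r => Real.exp (-l * r)) (Ioi 0) :=
    integrableOn_exp_mul_Ioi (neg_neg_of_pos hl) 0
  calc ∫ r in Ioo (0 : ℝ) 1, r⁻¹ * F r * Real.exp (-l * r)
      ≤ ∫ r in Ioo (0 : ℝ) 1, M * Real.exp (-l * r) := by
        refine integral_mono_of_nonneg ?_ ((hexp_int.mono_set Ioo_subset_Ioi_self).const_mul M) ?_
        · filter_upwards [ae_restrict_mem measurableSet_Ioo] with r hr
          exact mul_nonneg (mul_nonneg (inv_nonneg.2 hr.1.le) (hF_nonneg r hr)) (exp_pos _).le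
        · filter_upwards [ae_restrict_mem measurableSet_Ioo] with r hr
          gcongr
          rw [inv_mul_le_iff₀ hr.1, mul_comm]
          exact hF_le r hr
    _ ≤ M * ∫ r in Ioi (0 : ℝ), Real.exp (-l * r) := by
        rw [integral_const_mul]
        exact mul_le_mul_of_nonneg_left (setIntegral_mono_set hexp_int
          (Filter.Eventually.of_forall fun _ => (exp_pos _).le) Ioo_subset_Ioi_self.eventuallyLE) hM
    _ = M / l := by
        rw [integral_exp_mul_Ioi (neg_neg_of_pos hl)]
        field_simp
        simp

/-- Distance-weighted Dirichlet jump estimate at a corner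
(`‖d₀^{-1/2}(u₁ - u₂)‖²_{L²(Γ')} ≲ Re(s)^{-1} ‖g'‖²_{L²(-1,1)}`):
with `c₁ = cos(ω/2)`, `c₂ = sin(ω/2)`, `μ > 0`, there is `C = C(ω, μ)` such that for every
`C¹` function `g : [-1,1] → ℂ` and every `a > 0`,
`∫₀¹ r⁻¹ |g(r c₁) - g(-r c₁)|² e^{-2 a μ c₂ r} dr ≤ (C / a) ∫_{-1}^{1} |g'|²`. -/
theorem corner_weighted_dirichlet_jump_estimate (ω μ : ℝ) (hω : ω ∈ Set.Ioo 0 (2 * π))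
    (hμ : 0 < μ) :
    ∃ C : ℝ, 0 < C ∧
      ∀ g : ℝ → ℂ, ContDiffOn ℝ 1 g (Set.Icc (-1 : ℝ) 1) →
      ∀ a : ℝ, 0 < a →
      (∫ r in Set.Ioo (0 : ℝ) 1,
          r⁻¹ * ‖g (r * Real.cos (ω / 2)) - g (-(r * Real.cos (ω / 2)))‖ ^ 2 *
            Real.exp (-2 * a * μ * Real.sin (ω / 2) * r)) ≤
        C / a * ∫ τ in Set.Ioo (-1 : ℝ) 1, ‖deriv g τ‖ ^ 2 := by
  set c := Real.cos (ω / 2)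
  set s := Real.sin (ω / 2)
  have hs : 0 < s := sin_pos_of_pos_of_lt_pi (by linarith [hω.1]) (by linarith [hω.2])
  refine ⟨(|c| + 1) / (μ * s), by positivity, fun g hg a ha => ?_⟩
  set K := ∫ τ in Ioo (-1 : ℝ) 1, ‖deriv g τ‖ ^ 2
  have hK : 0 ≤ K := setIntegral_nonneg measurableSet_Ioo fun _ _ => sq_nonneg _
  have hjump : ∀ r ∈ Ioo (0 : ℝ) 1, ‖g (r * c) - g (-(r * c))‖ ^ 2 ≤ 2 * |c| * K * r := by
    intro r hr
    have hrc : |r * c| < 1 := by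
      rw [abs_mul, abs_of_pos hr.1]
      nlinarith [abs_cos_le_one (ω / 2), hr.2, hr.1, abs_nonneg c]
    rw [norm_sub_comp_neg_eq_abs]
    refine (hg.norm_sub_sq_le_mul_integral_Ioo_norm_deriv_sq (neg_le_self (abs_nonneg _))
      fun x hx => ⟨by linarith [hx.1], by linarith [hx.2]⟩).trans_eq ?_
    rw [abs_mul, abs_of_pos hr.1]
    ring
  calc _ = ∫ r in Ioo (0 : ℝ) 1,
        r⁻¹ * ‖g (r * c) - g (-(r * c))‖ ^ 2 * Real.exp (-(2 * a * μ * s) * r) := by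
          simp only [neg_mul]
    _ ≤ 2 * |c| * K / (2 * a * μ * s) :=
        setIntegral_Ioo_inv_mul_mul_exp_le (by positivity) (fun _ _ => sq_nonneg _) hjump
    _ ≤ (|c| + 1) / (μ * s) / a * K := by
        rw [div_div, div_mul_eq_mul_div, div_le_div_iff₀ (by positivity) (by positivity)]
        nlinarith [mul_pos (mul_pos ha hμ) hs]
end
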